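/- arXiv:1508.00225 — 2 statements merged into one kernel-verified Lean document; each statement's English description precedes it below -/
import Mathlib

section
/- For every internal node i ∈ {1, …, m}, define the vector K^i ∈ ℝ^{m+n} by K^i_j = 1 if j = i, K^i_j = −1 if pa(j) = i, and K^i_j = 0 otherwise. Then each K^i lies in the kernel of the linear map ℝ^{m+n} → ℝ^n given by x ↦ T x, and the m vectors K^1, …, K^m form a basis of this kernel. -/
/-!
Context: a rooted phylogenetic tree with `m ≥ 1` internal nodes (indices `0, …, m-1` in
`Fin (m+n)`, node `0` being the root) and `n ≥ 2` tips (indices `m, …, m+n-1`), encoded by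
a parent map `pa` with `pa i < i` for every non-root node `i`; by convention `pa root = root`
(the root has no proper parent).  `Par(i) = {pa^[r] i : r ≥ 0}`, `U` is the `(m+n) × (m+n)`
matrix with `U i j = 1` iff `j ∈ Par(i)`, and the tree matrix `T` consists of the last `n`
rows of `U`.

STATEMENT 0: for every internal node `i`, the vector `K^i` (`1` at `i`, `-1` at the children
of `i`, `0` elsewhere) lies in the kernel of `x ↦ T x`, and the `m` vectors `K^1, …, K^m`
form a basis of this kernel.
-/

open scoped Classical

/-- `j ∈ Par(i)`: `j` is `i` or an ancestor of `i`. -/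
def isAncestorOf (N : ℕ) (pa : Fin N → Fin N) (i j : Fin N) : Prop :=
  ∃ r : ℕ, pa^[r] i = j

/-- The matrix `U` of the tree: `U i j = 1` iff `j ∈ Par(i)`. -/
noncomputable def Umat (m n : ℕ) (pa : Fin (m + n) → Fin (m + n)) :
    Matrix (Fin (m + n)) (Fin (m + n)) ℝ :=
  fun i j => if isAncestorOf (m + n) pa i j then 1 else 0

/-- The tree matrix `T`: the last `n` rows of `U`. -/
noncomputable def Tmat (m n : ℕ) (pa : Fin (m + n) → Fin (m + n)) :
    Matrix (Fin n) (Fin (m + n)) ℝ :=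
  fun i j => Umat m n pa (Fin.natAdd m i) j

/-- The vector `K^i`: `1` at `i`, `-1` at each child of `i`, `0` elsewhere. -/
noncomputable def Kvec (m n : ℕ) (pa : Fin (m + n) → Fin (m + n)) (i : Fin (m + n)) :
    Fin (m + n) → ℝ :=
  fun j => if j = i then 1 else if pa j = i then -1 else 0

theorem stmt0 (m n : ℕ) (hm : 1 ≤ m) (hn : 2 ≤ n)
    (pa : Fin (m + n) → Fin (m + n))
    (hroot : pa ⟨0, by omega⟩ = ⟨0, by omega⟩)
    (hlt : ∀ i : Fin (m + n), i ≠ ⟨0, by omega⟩ → (pa i : ℕ) < (i : ℕ))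
    (htips : ∀ j : Fin (m + n),
      (∃ i : Fin (m + n), i ≠ ⟨0, by omega⟩ ∧ pa i = j) ↔ (j : ℕ) < m) :
    (∀ i : Fin m,
        Kvec m n pa (Fin.castAdd n i) ∈ LinearMap.ker (Tmat m n pa).mulVecLin) ∧
      LinearIndependent ℝ (fun i : Fin m => Kvec m n pa (Fin.castAdd n i)) ∧
      Submodule.span ℝ (Set.range (fun i : Fin m => Kvec m n pa (Fin.castAdd n i))) =
        LinearMap.ker (Tmat m n pa).mulVecLin := by
  have hN : 0 < m + n := by omega
  set z0 : Fin (m + n) := ⟨0, hN⟩ with hz0def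
  have hroot' : pa z0 = z0 := hroot
  have hlt' : ∀ i : Fin (m + n), i ≠ z0 → (pa i : ℕ) < (i : ℕ) := hlt
  have htips' : ∀ j : Fin (m + n), (∃ i, i ≠ z0 ∧ pa i = j) ↔ (j : ℕ) < m := htips
  have pa_le : ∀ k : Fin (m + n), (pa k : ℕ) ≤ (k : ℕ) := by
    intro k
    by_cases h : k = z0
    · subst h; rw [hroot']
    · exact (hlt' k h).le
  have anc_le : ∀ i j, isAncestorOf (m + n) pa i j → (j : ℕ) ≤ (i : ℕ) := by
    rintro i j ⟨r, rfl⟩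
    induction r with
    | zero => simp
    | succ s ih =>
      rw [Function.iterate_succ_apply']
      exact le_trans (pa_le _) ih
  have anc_refl : ∀ i, isAncestorOf (m + n) pa i i := fun i => ⟨0, rfl⟩
  have anc_step : ∀ i j, j ≠ i →
      (isAncestorOf (m + n) pa i j ↔ isAncestorOf (m + n) pa (pa i) j) := by
    intro i j hne
    constructor
    · rintro ⟨r, hr⟩
      cases r with
      | zero => exact absurd hr.symm hne
      | succ s => exact ⟨s, by rw [← Function.iterate_succ_apply]; exact hr⟩
    · rintro ⟨r, hr⟩
      exact ⟨r + 1, by rw [Function.iterate_succ_apply]; exact hr⟩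
  have iter_zero : ∀ r, pa^[r] z0 = z0 := by
    intro r
    induction r with
    | zero => rfl
    | succ s ih => rw [Function.iterate_succ_apply', ih, hroot']
  have anc_zero : ∀ j, isAncestorOf (m + n) pa z0 j ↔ j = z0 := by
    intro j
    constructor
    · rintro ⟨r, hr⟩; rw [iter_zero] at hr; exact hr.symm
    · rintro rfl; exact anc_refl _
  have anc_pa_self : ∀ i, i ≠ z0 → ¬ isAncestorOf (m + n) pa (pa i) i := by
    intro i hi h
    have h1 := anc_le _ _ h
    have h2 := hlt' i hi
    omega
  have Urec : ∀ (x : Fin (m + n) → ℝ) (i : Fin (m + n)), i ≠ z0 →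
      (Umat m n pa).mulVec x i = x i + (Umat m n pa).mulVec x (pa i) := by
    intro x i hi
    have hrow : ∀ j, Umat m n pa i j * x j =
        (if j = i then x j else 0) + Umat m n pa (pa i) j * x j := by
      intro j
      by_cases hj : j = i
      · subst hj
        simp [Umat, anc_refl, anc_pa_self j hi]
      · simp only [Umat, if_neg hj]
        rw [anc_step i j hj]
        simp
    simp only [Matrix.mulVec, dotProduct]
    rw [Finset.sum_congr rfl (fun j _ => hrow j), Finset.sum_add_distrib,
      Finset.sum_ite_eq' Finset.univ i x]
    simp
  have Ubase : ∀ x : Fin (m + n) → ℝ, (Umat m n pa).mulVec x z0 = x z0 := by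
    intro x
    simp only [Matrix.mulVec, dotProduct, Umat]
    have : ∀ j, (if isAncestorOf (m + n) pa z0 j then (1:ℝ) else 0) * x j =
        if j = z0 then x j else 0 := by
      intro j
      rw [anc_zero]
      by_cases h : j = z0 <;> simp [h]
    rw [Finset.sum_congr rfl (fun j _ => this j), Finset.sum_ite_eq' Finset.univ z0 x]
    simp
  have Trel : ∀ (x : Fin (m + n) → ℝ) (t : Fin n),
      (Tmat m n pa).mulVec x t = (Umat m n pa).mulVec x (Fin.natAdd m t) := by
    intro x t; rfl
  have pam : ∀ j : Fin (m + n), (pa j : ℕ) < m := by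
    intro j
    by_cases hj : j = z0
    · subst hj; rw [hroot']; exact hm
    · exact (htips' (pa j)).mp ⟨j, hj, rfl⟩
  -- U applied to Kvec
  have UK : ∀ (i : Fin m) (j : Fin (m + n)),
      (Umat m n pa).mulVec (Kvec m n pa (Fin.castAdd n i)) j =
        if j = Fin.castAdd n i then 1 else 0 := by
    intro i
    have main : ∀ r : ℕ, ∀ j : Fin (m + n), (j : ℕ) = r →
        (Umat m n pa).mulVec (Kvec m n pa (Fin.castAdd n i)) j =
          if j = Fin.castAdd n i then 1 else 0 := by
      intro r
      induction r using Nat.strong_induction_on with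
      | _ r ih =>
        intro j hj
        by_cases hj0 : j = z0
        · subst hj0
          rw [Ubase]
          simp only [Kvec, hroot']
          by_cases h : z0 = Fin.castAdd n i <;> simp [h]
        · rw [Urec _ j hj0,
            ih ((pa j : ℕ)) (by rw [← hj]; exact hlt' j hj0) (pa j) rfl]
          simp only [Kvec]
          by_cases h1 : j = Fin.castAdd n i
          · have h2 : pa j ≠ Fin.castAdd n i := by
              intro he
              have hpj := hlt' j hj0
              have : (pa j : ℕ) = (j : ℕ) := by rw [he, h1]
              omega
            subst h1; simp [h2]
          · by_cases h2 : pa j = Fin.castAdd n i <;> simp [h1, h2]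
    intro j; exact main (j : ℕ) j rfl
  have hker : ∀ i : Fin m,
      Kvec m n pa (Fin.castAdd n i) ∈ LinearMap.ker (Tmat m n pa).mulVecLin := by
    intro i
    rw [LinearMap.mem_ker, Matrix.mulVecLin_apply]
    funext t
    rw [Trel, UK]
    have hne : Fin.natAdd m t ≠ Fin.castAdd n i := by
      intro h
      have h2 := congrArg Fin.val h
      simp only [Fin.coe_natAdd, Fin.coe_castAdd] at h2
      have := i.isLt
      omega
    simp [hne]
  -- sum formula
  have sumK : ∀ (c : Fin m → ℝ) (j : Fin (m + n)),
      (∑ i : Fin m, c i * Kvec m n pa (Fin.castAdd n i) j) =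
        (if h : (j : ℕ) < m then c ⟨(j : ℕ), h⟩ else 0) -
          (if j = z0 then 0 else c ⟨(pa j : ℕ), pam j⟩) := by
    intro c j
    by_cases hj0 : j = z0
    · subst hj0
      have hterm : ∀ i : Fin m, c i * Kvec m n pa (Fin.castAdd n i) z0 =
          if (⟨0, hm⟩ : Fin m) = i then c i else 0 := by
        intro i
        simp only [Kvec, hroot']
        by_cases h : z0 = Fin.castAdd n i
        · have hi : (⟨0, hm⟩ : Fin m) = i := by
            apply Fin.ext
            have := congrArg Fin.val h
            simpa using this
          simp [h, hi]
        · have h3 : (⟨0, hm⟩ : Fin m) ≠ i := by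
            intro he
            apply h
            apply Fin.ext
            have := congrArg Fin.val he
            simpa using this
          simp [h, h3]
      rw [Finset.sum_congr rfl (fun i _ => hterm i), Finset.sum_ite_eq]
      have hz : ((z0 : Fin (m + n)) : ℕ) < m := hm
      rw [dif_pos hz, if_pos rfl]
      simp [hz0def]
    · have hkv : ∀ i : Fin m, c i * Kvec m n pa (Fin.castAdd n i) j =
          (if j = Fin.castAdd n i then c i else 0) -
            (if pa j = Fin.castAdd n i then c i else 0) := by
        intro i
        simp only [Kvec]
        by_cases h1 : j = Fin.castAdd n i
        · have hpj : pa j ≠ Fin.castAdd n i := by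
            intro he
            have hpl := hlt' j hj0
            have : (pa j : ℕ) = (j : ℕ) := by rw [he, h1]
            omega
          subst h1; simp [hpj]
        · by_cases hp : pa j = Fin.castAdd n i <;> simp [h1, hp]
      rw [Finset.sum_congr rfl (fun i _ => hkv i), Finset.sum_sub_distrib]
      congr 1
      · by_cases hjm : (j : ℕ) < m
        · rw [dif_pos hjm]
          have key : ∀ i : Fin m, (j = Fin.castAdd n i) ↔ ((⟨(j:ℕ), hjm⟩ : Fin m) = i) := by
            intro i
            constructor
            · intro h; apply Fin.ext; simpa using congrArg Fin.val h
            · intro h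
              apply Fin.ext
              have h2 := congrArg Fin.val h
              simp only [Fin.coe_castAdd] at h2 ⊢
              omega
          simp only [key]
          rw [Finset.sum_ite_eq]
          simp
        · rw [dif_neg hjm]
          apply Finset.sum_eq_zero
          intro i _
          rw [if_neg]
          intro h
          apply hjm
          have := congrArg Fin.val h
          simp only [Fin.coe_castAdd] at this
          rw [this]; exact i.isLt
      · rw [if_neg hj0]
        have key : ∀ i : Fin m, (pa j = Fin.castAdd n i) ↔ ((⟨(pa j : ℕ), pam j⟩ : Fin m) = i) := by
          intro i
          constructor
          · intro h; apply Fin.ext; simpa using congrArg Fin.val h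
          · intro h
            apply Fin.ext
            have h2 := congrArg Fin.val h
            simp only [Fin.coe_castAdd] at h2 ⊢
            omega
        simp only [key]
        rw [Finset.sum_ite_eq]
        simp
  -- linear independence
  have hind : LinearIndependent ℝ (fun i : Fin m => Kvec m n pa (Fin.castAdd n i)) := by
    rw [Fintype.linearIndependent_iff]
    intro c hc
    have hco : ∀ j : Fin (m + n),
        (∑ i : Fin m, c i * Kvec m n pa (Fin.castAdd n i) j) = 0 := by
      intro j
      have := congrFun hc j
      simpa [Finset.sum_apply, Pi.smul_apply, smul_eq_mul] using this
    have hrel : ∀ j : Fin (m + n),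
        (if h : (j : ℕ) < m then c ⟨(j : ℕ), h⟩ else 0) =
          (if j = z0 then 0 else c ⟨(pa j : ℕ), pam j⟩) := by
      intro j
      have h := hco j
      rw [sumK] at h
      linarith
    have main : ∀ r : ℕ, ∀ i : Fin m, (i : ℕ) = r → c i = 0 := by
      intro r
      induction r using Nat.strong_induction_on with
      | _ r ih =>
        intro i hi
        by_cases hi0 : (i : ℕ) = 0
        · have h := hrel z0
          rw [if_pos rfl, dif_pos (show ((z0 : Fin (m + n)) : ℕ) < m from hm)] at h
          have hie : i = (⟨((z0 : Fin (m + n)) : ℕ), hm⟩ : Fin m) := Fin.ext hi0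
          rw [hie]; exact h
        · have hj0 : Fin.castAdd n i ≠ z0 := by
            intro h
            apply hi0
            have := congrArg Fin.val h
            simpa using this
          have h := hrel (Fin.castAdd n i)
          rw [if_neg hj0] at h
          have hcm : ((Fin.castAdd n i : Fin (m + n)) : ℕ) < m := by
            simpa using i.isLt
          rw [dif_pos hcm] at h
          have h1 : (⟨((Fin.castAdd n i : Fin (m + n)) : ℕ), hcm⟩ : Fin m) = i :=
            Fin.ext (by simp)
          rw [h1] at h
          rw [h]
          apply ih ((pa (Fin.castAdd n i) : ℕ))
          · have hl := hlt' _ hj0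
            simp only [Fin.coe_castAdd] at hl
            omega
          · rfl
    exact fun i => main (i : ℕ) i rfl
  refine ⟨hker, hind, ?_⟩
  apply le_antisymm
  · rw [Submodule.span_le]
    rintro _ ⟨i, rfl⟩
    exact hker i
  · intro x hx
    rw [LinearMap.mem_ker, Matrix.mulVecLin_apply] at hx
    have hxy : x = ∑ i : Fin m,
        (Umat m n pa).mulVec x (Fin.castAdd n i) • Kvec m n pa (Fin.castAdd n i) := by
      funext j
      rw [Finset.sum_apply]
      simp only [Pi.smul_apply, smul_eq_mul]
      rw [sumK (fun i => (Umat m n pa).mulVec x (Fin.castAdd n i)) j]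
      have hpa : Fin.castAdd n (⟨(pa j : ℕ), pam j⟩ : Fin m) = pa j := Fin.ext (by simp)
      by_cases hj0 : j = z0
      · subst hj0
        rw [if_pos rfl, dif_pos (show ((z0 : Fin (m + n)) : ℕ) < m from hm)]
        have he : Fin.castAdd n (⟨((z0 : Fin (m + n)) : ℕ), hm⟩ : Fin m) = z0 :=
          Fin.ext (by simp)
        rw [he, Ubase]
        simp
      · rw [if_neg hj0, hpa]
        by_cases hjm : (j : ℕ) < m
        · rw [dif_pos hjm]
          have he : Fin.castAdd n (⟨(j : ℕ), hjm⟩ : Fin m) = j := Fin.ext (by simp)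
          rw [he, Urec x j hj0]
          ring
        · rw [dif_neg hjm]
          have hrec := Urec x j hj0
          have hyj : (Umat m n pa).mulVec x j = 0 := by
            have hjm' : m ≤ (j : ℕ) := le_of_not_gt hjm
            have hlt2 : (j : ℕ) - m < n := by omega
            have ht : j = Fin.natAdd m ⟨(j : ℕ) - m, hlt2⟩ := Fin.ext (by simp; omega)
            have h0 := congrFun hx ⟨(j : ℕ) - m, hlt2⟩
            rw [Trel] at h0
            rw [ht]
            exact h0
          rw [hyj] at hrec
          linarith
    rw [hxy]
    apply Submodule.sum_mem
    intro i _
    exact Submodule.smul_mem _ _ (Submodule.subset_span ⟨i, rfl⟩)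
end

section
/- Let T be a rooted tree, C a finite nonempty set of colors, and d a map from the leaves of T to C. Then: (1) if i is a leaf of T, then S_i(k) = 0 and T_i(k) = 1 when d(i) = k, and S_i(k) = ∞ and T_i(k) = 0 otherwise; (2) if i is an internal node of T with children i_1, …, i_L, then for every color k ∈ C, setting K^l_k = argmin_{p ∈ C} ( S_{i_l}(p) + 1_{p ≠ k} ) for each l, and choosing arbitrary p_l ∈ K^l_k, one has S_i(k) = Σ_{l=1}^{L} ( S_{i_l}(p_l) + 1_{p_l ≠ k} ) and T_i(k) = Π_{l=1}^{L} Σ_{p ∈ K^l_k} T_{i_l}(p); (3) the number of colorings of T extending d whose number of color changes is minimal among all colorings of T extending d equals Σ_{k ∈ argmin_{k' ∈ C} S_r(k')} T_r(k), where r is the root of T. -/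
/-!
Context: rooted trees are given inductively (a leaf, or a root with a nonempty list of
child subtrees).  A coloring of a tree `T` with colors in a finite nonempty set `C` is a
tree `B` of the same shape carrying a color at each node; its number of color changes is
the number of edges whose endpoints have different colors.  A map `d` from the leaves of
`T` to `C` is encoded as the (left-to-right) list of leaf colors; a coloring extends `d`
iff its leaf color list is `d`.  `Scost T d k` is the minimal number of changes of a
coloring of `T` extending `d` with root color `k` (`∞` if none exists), and `Tcount T d k`
the number of such minimizing colorings.

STATEMENT 3: (1) the leaf case formulas for `S` and `T`; (2) the recursive formulas at an
internal node, for any choice `p_l` in the argmin sets `K^l_k`; (3) the number of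
minimal-change colorings of `T` extending `d` is `Σ_{k ∈ argmin S_root} Tcount root k`.
-/

open scoped Classical

/-- Trees with a piece of data of type `C` at each node. -/
inductive CTree (C : Type) : Type where
  | leaf (c : C) : CTree C
  | node (c : C) (ts : List (CTree C)) : CTree C

namespace CTree

variable {C : Type}

/-- The color at the root. -/
def rootColor : CTree C → C
  | leaf c => c
  | node c _ => c

/-- The underlying (uncolored) shape of a colored tree. -/
def shape : CTree C → CTree Unit
  | leaf _ => leaf ()
  | node _ ts => node () (ts.attach.map (fun s => shape s.1))
decreasing_by have := List.sizeOf_lt_of_mem s.2; simp at *; omega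

/-- The list of colors at the leaves, from left to right. -/
def leafColors : CTree C → List C
  | leaf c => [c]
  | node _ ts => (ts.attach.map (fun s => leafColors s.1)).flatten
decreasing_by have := List.sizeOf_lt_of_mem s.2; simp at *; omega

/-- The number of edges `(u, v)` (`v` a child of `u`) with differently colored endpoints. -/
def changes [DecidableEq C] : CTree C → ℕ
  | leaf _ => 0
  | node c ts =>
      (ts.attach.map (fun s => changes s.1 + if rootColor s.1 ≠ c then 1 else 0)).sum
decreasing_by have := List.sizeOf_lt_of_mem s.2; simp at *; omega

/-- The number of leaves of a tree. -/
def numLeaves (T : CTree Unit) : ℕ := (leafColors T).length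

/-- Every internal node has a nonempty list of children. -/
inductive WF : CTree Unit → Prop
  | leaf : WF (leaf ())
  | node (ts : List (CTree Unit)) (hne : ts ≠ []) (hts : ∀ s ∈ ts, WF s) :
      WF (node () ts)

end CTree

open CTree

/-- `Scost T d k`: minimal number of color changes over colorings of `T` extending `d`
with root color `k` (`∞` if there is no such coloring). -/
noncomputable def Scost {C : Type} (T : CTree Unit) (d : List C) (k : C) : ℕ∞ :=
  ⨅ B ∈ {B : CTree C | shape B = T ∧ leafColors B = d ∧ rootColor B = k},
    (changes B : ℕ∞)

/-- `Tcount T d k`: number of colorings of `T` extending `d` with root color `k`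
achieving the minimal number of changes `Scost T d k` (`0` if `Scost T d k = ∞`). -/
noncomputable def Tcount {C : Type} (T : CTree Unit) (d : List C) (k : C) : ℕ :=
  {B : CTree C | shape B = T ∧ leafColors B = d ∧ rootColor B = k ∧
    (changes B : ℕ∞) = Scost T d k}.ncard


namespace CTree

variable {C : Type}

@[simp] lemma shape_leaf (c : C) : shape (leaf c) = CTree.leaf () := by rw [shape]

@[simp] lemma shape_node (c : C) (ts : List (CTree C)) :
    shape (node c ts) = CTree.node () (ts.map shape) := by
  rw [shape]; simp [List.attach_map_val]

@[simp] lemma leafColors_leaf (c : C) : leafColors (leaf c) = [c] := by rw [leafColors]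

@[simp] lemma leafColors_node (c : C) (ts : List (CTree C)) :
    leafColors (node c ts) = (ts.map leafColors).flatten := by
  rw [leafColors]; simp [List.attach_map_val]

@[simp] lemma changes_leaf (c : C) : changes (leaf c) = 0 := by rw [changes]

@[simp] lemma changes_node (c : C) (ts : List (CTree C)) :
    changes (node c ts) =
      (ts.map (fun s => changes s + if rootColor s ≠ c then 1 else 0)).sum := by
  rw [changes]
  simp only [ne_eq, ite_not]
  rw [List.attach_map_val (l := ts) (f := fun s => changes s + if rootColor s = c then 0 else 1)]

@[simp] lemma rootColor_leaf (c : C) : rootColor (leaf c) = c := rfl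
@[simp] lemma rootColor_node (c : C) (ts : List (CTree C)) : rootColor (node c ts) = c := rfl

lemma shape_eq_leaf_iff {B : CTree C} : shape B = CTree.leaf () ↔ ∃ c, B = leaf c := by
  cases B with
  | leaf c => simp
  | node c ts => simp

lemma shape_eq_node_iff {B : CTree C} {ss : List (CTree Unit)} :
    shape B = CTree.node () ss ↔ ∃ c bs, B = node c bs ∧ bs.map shape = ss := by
  cases B with
  | leaf c => simp
  | node c ts =>
    simp only [shape_node, node.injEq, true_and]
    constructor
    · rintro h; exact ⟨c, ts, ⟨rfl, rfl⟩, h⟩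
    · rintro ⟨c', bs, ⟨h1a, h1b⟩, h2⟩
      subst h1b; exact h2

lemma length_leafColors : ∀ (B : CTree C), (leafColors B).length = numLeaves (shape B)
  | leaf c => by simp [numLeaves]
  | node c bs => by
    simp only [leafColors_node, shape_node, numLeaves, List.length_flatten, List.map_map]
    congr 1
    refine List.map_congr_left (fun b hb => ?_)
    have := length_leafColors b
    simpa [numLeaves] using this
termination_by B => sizeOf B
decreasing_by have := List.sizeOf_lt_of_mem hb; simp at *; omega

end CTree

namespace Stmt3Aux
set_option linter.unusedSectionVars false
open CTree

variable {C : Type}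

/-- The set of lists whose entries lie pointwise in a given list of sets. -/
def listPi {α : Type*} : List (Set α) → Set (List α)
  | [] => {[]}
  | S :: Ss => (fun p : α × List α => p.1 :: p.2) '' (S ×ˢ listPi Ss)

lemma mem_listPi_iff {α : Type*} : ∀ {Ss : List (Set α)} {bs : List α},
    bs ∈ listPi Ss ↔ List.Forall₂ (· ∈ ·) bs Ss
  | [], bs => by cases bs <;> simp [listPi]
  | S :: Ss, bs => by
    cases bs with
    | nil => simp [listPi]
    | cons b bs =>
      simp only [listPi, Set.mem_image, Set.mem_prod, Prod.exists, List.forall₂_cons]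
      constructor
      · rintro ⟨x, xs, ⟨h1, h2⟩, h3⟩
        injection h3 with h3a h3b; subst h3a; subst h3b
        exact ⟨h1, (mem_listPi_iff).1 h2⟩
      · rintro ⟨h1, h2⟩
        exact ⟨b, bs, ⟨h1, (mem_listPi_iff).2 h2⟩, rfl⟩

lemma listPi_finite {α : Type*} : ∀ (Ss : List (Set α)), (∀ S ∈ Ss, S.Finite) →
    (listPi Ss).Finite
  | [], _ => by simp [listPi]
  | S :: Ss, h => by
    have h1 : S.Finite := h S (by simp)
    have h2 := listPi_finite Ss (fun S hS => h S (by simp [hS]))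
    exact (h1.prod h2).image _

lemma ncard_biUnion {α β : Type*} (K : Finset β) (f : β → Set α)
    (hf : ∀ k ∈ K, (f k).Finite)
    (hd : ∀ k ∈ K, ∀ k' ∈ K, k ≠ k' → Disjoint (f k) (f k')) :
    (⋃ k ∈ K, f k).ncard = ∑ k ∈ K, (f k).ncard := by
  classical
  induction K using Finset.induction with
  | empty => simp
  | @insert a s ha ih =>
    have hU : (⋃ k ∈ s, f k) = ⋃ k ∈ (s : Set β), f k := by simp
    have hfin : (⋃ k ∈ s, f k).Finite := by
      rw [hU]
      exact Set.Finite.biUnion s.finite_toSet (fun k hk => hf k (Finset.mem_insert_of_mem hk))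
    have hdisj : Disjoint (f a) (⋃ k ∈ s, f k) := by
      simp only [Set.disjoint_iUnion_right]
      exact fun k hk => hd a (by simp) k (by simp [hk]) (fun h => ha (h ▸ hk))
    rw [Finset.set_biUnion_insert, Set.ncard_union_eq hdisj (hf a (by simp)) hfin,
      Finset.sum_insert ha, ih (fun k hk => hf k (by simp [hk]))
        (fun k hk k' hk' hne => hd k (by simp [hk]) k' (by simp [hk']) hne)]

lemma ncard_listPi {α : Type*} : ∀ (Ss : List (Set α)), (∀ S ∈ Ss, S.Finite) →
    (listPi Ss).ncard = (Ss.map Set.ncard).prod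
  | [], _ => by simp [listPi]
  | S :: Ss, h => by
    classical
    have h1 : S.Finite := h S (by simp)
    have h2fin := listPi_finite Ss (fun S hS => h S (by simp [hS]))
    have ih := ncard_listPi Ss (fun S hS => h S (by simp [hS]))
    have himg : listPi (S :: Ss) = ⋃ b ∈ h1.toFinset, (fun bs => b :: bs) '' listPi Ss := by
      ext bs
      simp only [listPi, Set.mem_image, Set.mem_prod, Prod.exists, Set.mem_iUnion,
        Set.Finite.mem_toFinset, exists_prop]
      constructor
      · rintro ⟨x, xs, ⟨hx, hxs⟩, rfl⟩; exact ⟨x, hx, xs, hxs, rfl⟩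
      · rintro ⟨x, hx, xs, hxs, rfl⟩; exact ⟨x, xs, ⟨hx, hxs⟩, rfl⟩
    rw [himg, ncard_biUnion _ _ (fun k _ => h2fin.image _)
      (fun k _ k' _ hne => by
        rw [Set.disjoint_left]
        rintro bs ⟨xs, _, rfl⟩ ⟨ys, _, h⟩
        exact hne (by injection h with h1 h2; exact h1.symm))]
    have hinj : ∀ b : α, Function.Injective (fun bs : List α => b :: bs) := by
      intro b xs ys h; injection h
    simp only [Set.ncard_image_of_injective _ (hinj _),
      Finset.sum_const, smul_eq_mul, List.map_cons, List.prod_cons, ih]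
    rw [Set.ncard_eq_toFinset_card S h1]

end Stmt3Aux

namespace Stmt3Aux
open CTree

variable {C : Type} [Fintype C]
set_option linter.unusedSectionVars false

lemma forall₂_shape {bs : List (CTree C)} {ss : List (CTree Unit)} (h : bs.map shape = ss) :
    bs ∈ listPi (ss.map (fun s => {B : CTree C | shape B = s})) := by
  subst h
  rw [mem_listPi_iff]
  induction bs with
  | nil => simp
  | cons b bs ih => exact List.Forall₂.cons rfl ih

lemma finite_shape_fiber : ∀ (T : CTree Unit), {B : CTree C | shape B = T}.Finite
  | CTree.leaf () => by
    apply Set.Finite.subset (Set.finite_range (fun c : C => CTree.leaf c))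
    intro B hB
    obtain ⟨c, rfl⟩ := shape_eq_leaf_iff.1 hB
    exact ⟨c, rfl⟩
  | CTree.node () ss => by
    classical
    have hL : (listPi (ss.map (fun s => {B : CTree C | shape B = s}))).Finite :=
      listPi_finite _ (by
        intro S hS
        simp only [List.mem_map] at hS
        obtain ⟨s, hs, rfl⟩ := hS
        exact finite_shape_fiber s)
    apply Set.Finite.subset
      (((Set.finite_univ (α := C)).prod hL).image (fun p => CTree.node p.1 p.2))
    intro B hB
    obtain ⟨c, bs, rfl, hmap⟩ := shape_eq_node_iff.1 hB
    exact ⟨(c, bs), ⟨trivial, forall₂_shape hmap⟩, rfl⟩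
termination_by T => sizeOf T
decreasing_by have := List.sizeOf_lt_of_mem hs; simp at *; omega

lemma exists_split (ns : List ℕ) : ∀ (d : List C), d.length = ns.sum →
    ∃ ds : List (List C), ds.flatten = d ∧ ds.map List.length = ns := by
  induction ns with
  | nil => intro d hd; exact ⟨[], by simpa using (List.length_eq_zero_iff.1 (by simpa using hd)).symm, rfl⟩
  | cons n ns ih =>
    intro d hd
    rw [List.sum_cons] at hd
    obtain ⟨ds, h1, h2⟩ := ih (d.drop n) (by rw [List.length_drop, hd]; omega)
    refine ⟨d.take n :: ds, by simp [h1], ?_⟩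
    simp [h2, List.length_take]
    omega

lemma exists_ext [Nonempty C] : ∀ (T : CTree Unit), WF T → ∀ (d : List C),
    d.length = numLeaves T → ∃ B : CTree C, shape B = T ∧ leafColors B = d
  | CTree.leaf (), _, d, hd => by
    have : d.length = 1 := by simpa [numLeaves] using hd
    obtain ⟨c, rfl⟩ := List.length_eq_one_iff.1 this
    exact ⟨CTree.leaf c, by simp⟩
  | CTree.node () ss, hwf, d, hd => by
    classical
    have hwf' : ∀ s ∈ ss, WF s := by cases hwf; assumption
    have hnum : numLeaves (CTree.node () ss) = (ss.map numLeaves).sum := by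
      simp [numLeaves, List.length_flatten, List.map_map]; rfl
    obtain ⟨ds, hflat, hlens⟩ := exists_split (ss.map numLeaves) d (by rw [hd, hnum])
    -- build children by recursion on the zip
    have key : ∀ (ss' : List (CTree Unit)), (∀ s ∈ ss', sizeOf s < sizeOf (CTree.node () ss)) →
        (∀ s ∈ ss', WF s) →
        ∀ (ds' : List (List C)), ds'.map List.length = ss'.map numLeaves →
        ∃ bs : List (CTree C), bs.map shape = ss' ∧ bs.map leafColors = ds' := by
      intro ss' hsz
      induction ss' with
      | nil =>
        intro _ ds' h
        have hds' : ds' = [] := by simpa using h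
        subst hds'
        exact ⟨[], rfl, rfl⟩
      | cons s ss' ih =>
        intro hwf'' ds' h
        cases ds' with
        | nil => simp at h
        | cons d' ds' =>
          simp only [List.map_cons, List.cons.injEq] at h
          obtain ⟨b, hb1, hb2⟩ := exists_ext s (hwf'' s (by simp)) d' h.1
          obtain ⟨bs, hbs1, hbs2⟩ := ih (fun x hx => hsz x (by simp [hx]))
            (fun x hx => hwf'' x (by simp [hx])) ds' h.2
          exact ⟨b :: bs, by simp [hb1, hbs1], by simp [hb2, hbs2]⟩
    have hsz : ∀ s ∈ ss, sizeOf s < sizeOf (CTree.node () ss) := by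
      intro s hs; have := List.sizeOf_lt_of_mem hs; simp; omega
    obtain ⟨bs, h1, h2⟩ := key ss hsz hwf' ds (by rw [hlens])
    exact ⟨CTree.node (Classical.arbitrary C) bs, by simp [h1], by simp [h2, hflat]⟩
termination_by T => sizeOf T
decreasing_by simp_wf; have := hsz s (by simp); simp at this ⊢; omega

end Stmt3Aux

namespace Stmt3Aux
set_option linter.unusedSectionVars false
open CTree

variable {C : Type} [Fintype C]

/-- colorings of `T` extending `d` with root color `k`. -/
def ExtS (T : CTree Unit) (d : List C) (k : C) : Set (CTree C) :=
  {B | shape B = T ∧ leafColors B = d ∧ rootColor B = k}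

/-- minimizing colorings. -/
def MinS (T : CTree Unit) (d : List C) (k : C) : Set (CTree C) :=
  {B ∈ ExtS T d k | (changes B : ℕ∞) = Scost T d k}

lemma scost_def (T : CTree Unit) (d : List C) (k : C) :
    Scost T d k = ⨅ B ∈ ExtS T d k, (changes B : ℕ∞) := rfl

lemma tcount_def (T : CTree Unit) (d : List C) (k : C) :
    Tcount T d k = (MinS T d k).ncard := by
  unfold Tcount MinS ExtS
  congr 1
  ext B
  simp only [Set.mem_setOf_eq, Set.mem_sep_iff]
  tauto

lemma extS_finite (T : CTree Unit) (d : List C) (k : C) : (ExtS T d k).Finite :=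
  (finite_shape_fiber T).subset (fun _ hB => hB.1)

lemma minS_finite (T : CTree Unit) (d : List C) (k : C) : (MinS T d k).Finite :=
  (extS_finite T d k).subset (fun _ hB => hB.1)

lemma scost_le {T : CTree Unit} {d : List C} {k : C} {B : CTree C} (hB : B ∈ ExtS T d k) :
    Scost T d k ≤ (changes B : ℕ∞) := by
  rw [scost_def]; exact iInf₂_le B hB

lemma le_scost {T : CTree Unit} {d : List C} {k : C} {x : ℕ∞}
    (h : ∀ B ∈ ExtS T d k, x ≤ (changes B : ℕ∞)) : x ≤ Scost T d k := by
  rw [scost_def]; exact le_iInf₂ h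

lemma exists_scost {T : CTree Unit} {d : List C} {k : C} (hne : (ExtS T d k).Nonempty) :
    ∃ B ∈ ExtS T d k, (changes B : ℕ∞) = Scost T d k := by
  obtain ⟨B, hB, hmin⟩ := Set.exists_min_image _ changes (extS_finite T d k) hne
  exact ⟨B, hB, le_antisymm
    ((le_scost fun B' hB' => Nat.cast_le.2 (hmin B' hB')) : _)
    (scost_le hB)⟩

lemma scost_eq_top_iff {T : CTree Unit} {d : List C} {k : C} :
    Scost T d k = ⊤ ↔ ExtS T d k = ∅ := by
  constructor
  · intro h
    by_contra hne
    obtain ⟨B, hB, hval⟩ := exists_scost (Set.nonempty_iff_ne_empty.2 hne)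
    rw [h] at hval
    exact (ENat.coe_ne_top _) hval
  · intro h
    rw [scost_def, h]
    simp

lemma scost_ne_top_iff {T : CTree Unit} {d : List C} {k : C} :
    Scost T d k ≠ ⊤ ↔ (ExtS T d k).Nonempty := by
  rw [Ne, scost_eq_top_iff, Set.nonempty_iff_ne_empty]

lemma minS_of_top {T : CTree Unit} {d : List C} {k : C} (h : Scost T d k = ⊤) :
    MinS T d k = ∅ := by
  ext B
  simp only [MinS, Set.mem_sep_iff, Set.mem_empty_iff_false, iff_false, not_and]
  intro _ hval
  rw [h] at hval
  exact (ENat.coe_ne_top _) hval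

lemma mem_minS_iff {T : CTree Unit} {d : List C} {k : C} {B : CTree C} :
    B ∈ MinS T d k ↔ B ∈ ExtS T d k ∧ (changes B : ℕ∞) = Scost T d k := Iff.rfl

end Stmt3Aux

namespace Stmt3Aux
set_option linter.unusedSectionVars false
open CTree

variable {C : Type} [Fintype C]

lemma extS_leaf_eq (c : C) : ExtS (CTree.leaf ()) [c] c = {CTree.leaf c} := by
  ext B
  simp only [ExtS, Set.mem_setOf_eq, Set.mem_singleton_iff]
  constructor
  · rintro ⟨h1, h2, h3⟩
    obtain ⟨c', rfl⟩ := shape_eq_leaf_iff.1 h1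
    simpa using h2
  · rintro rfl
    exact ⟨by simp, by simp, rfl⟩

lemma extS_leaf_empty {c k : C} (h : c ≠ k) : ExtS (CTree.leaf ()) [c] k = ∅ := by
  ext B
  simp only [ExtS, Set.mem_setOf_eq, Set.mem_empty_iff_false, iff_false, not_and]
  intro h1 h2 h3
  obtain ⟨c', rfl⟩ := shape_eq_leaf_iff.1 h1
  simp only [leafColors_leaf, List.cons.injEq, and_true] at h2
  exact h (h2 ▸ h3)

lemma scost_leaf (c k : C) :
    Scost (CTree.leaf ()) [c] k = if c = k then 0 else ⊤ := by
  split_ifs with h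
  · subst h
    refine le_antisymm ?_ zero_le
    have hmem : CTree.leaf c ∈ ExtS (CTree.leaf ()) [c] c := by
      rw [extS_leaf_eq]; rfl
    simpa using scost_le hmem
  · rw [scost_eq_top_iff]
    exact extS_leaf_empty h

lemma tcount_leaf (c k : C) :
    Tcount (CTree.leaf ()) [c] k = if c = k then 1 else 0 := by
  rw [tcount_def]
  split_ifs with h
  · subst h
    have : MinS (CTree.leaf ()) [c] c = {CTree.leaf c} := by
      ext B
      rw [mem_minS_iff, extS_leaf_eq]
      simp only [Set.mem_singleton_iff, scost_leaf, if_pos rfl]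
      constructor
      · rintro ⟨rfl, _⟩; rfl
      · rintro rfl; simp
    rw [this, Set.ncard_singleton]
  · rw [minS_of_top (by rw [scost_leaf]; simp [h]), Set.ncard_empty]

lemma part3 (T : CTree Unit) (d : List C) :
    {B : CTree C | shape B = T ∧ leafColors B = d ∧
        (changes B : ℕ∞) =
          ⨅ B' ∈ {B' : CTree C | shape B' = T ∧ leafColors B' = d},
            (changes B' : ℕ∞)}.ncard =
      ∑ k ∈ Finset.univ.filter (fun k : C => Scost T d k = ⨅ k' : C, Scost T d k'),
        Tcount T d k := by
  classical
  set I : ℕ∞ := ⨅ B' ∈ {B' : CTree C | shape B' = T ∧ leafColors B' = d},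
    (changes B' : ℕ∞) with hIdef
  have hI : I = ⨅ k : C, Scost T d k := by
    refine le_antisymm (le_iInf fun k => le_scost fun B hB => ?_) ?_
    · exact iInf₂_le B ⟨hB.1, hB.2.1⟩
    · refine le_iInf₂ fun B hB => ?_
      exact le_trans (iInf_le _ (rootColor B)) (scost_le ⟨hB.1, hB.2, rfl⟩)
  set K : Finset C := Finset.univ.filter (fun k : C => Scost T d k = ⨅ k' : C, Scost T d k')
    with hK
  have hset : {B : CTree C | shape B = T ∧ leafColors B = d ∧ (changes B : ℕ∞) = I} =
      ⋃ k ∈ K, MinS T d k := by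
    ext B
    simp only [Set.mem_setOf_eq, Set.mem_iUnion, exists_prop]
    constructor
    · rintro ⟨h1, h2, h3⟩
      have hBk : B ∈ ExtS T d (rootColor B) := ⟨h1, h2, rfl⟩
      have h4 : Scost T d (rootColor B) ≤ (changes B : ℕ∞) := scost_le hBk
      have h5 : (⨅ k' : C, Scost T d k') ≤ Scost T d (rootColor B) := iInf_le _ _
      have e1 : (changes B : ℕ∞) = ⨅ k' : C, Scost T d k' := h3.trans hI
      have h6 : Scost T d (rootColor B) = ⨅ k' : C, Scost T d k' :=
        le_antisymm (h4.trans_eq e1) h5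
      have h7 : (changes B : ℕ∞) = Scost T d (rootColor B) :=
        le_antisymm (e1.le.trans h5) h4
      exact ⟨rootColor B, by simp [hK, h6], hBk, h7⟩
    · rintro ⟨k, hk, hB, hch⟩
      simp only [hK, Finset.mem_filter, Finset.mem_univ, true_and] at hk
      exact ⟨hB.1, hB.2.1, by rw [hch, hk, ← hI]⟩
  rw [hset, ncard_biUnion K _ (fun k _ => minS_finite T d k) (fun k _ k' _ hne => by
    rw [Set.disjoint_left]
    rintro B ⟨⟨_, _, hr⟩, _⟩ ⟨⟨_, _, hr'⟩, _⟩
    exact hne (hr.symm.trans hr'))]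
  exact Finset.sum_congr rfl (fun k _ => (tcount_def T d k).symm)

end Stmt3Aux

namespace Stmt3Aux
set_option linter.unusedSectionVars false
open CTree

variable {C : Type} [Fintype C]

lemma mem_listPi_ofFn_iff {α : Type*} {n : ℕ} {f : Fin n → Set α} {bs : List α} :
    bs ∈ listPi (List.ofFn f) ↔
      ∃ h : bs.length = n, ∀ l : Fin n, bs.get (Fin.cast h.symm l) ∈ f l := by
  rw [mem_listPi_iff, List.forall₂_iff_get]
  simp only [List.length_ofFn, List.get_ofFn]
  constructor
  · rintro ⟨h, h2⟩
    refine ⟨h, fun l => ?_⟩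
    have := h2 l.1 (by omega) l.2
    simpa using this
  · rintro ⟨h, h2⟩
    refine ⟨h, fun i h1 hn => ?_⟩
    have := h2 ⟨i, hn⟩
    simpa using this

lemma flatten_inj : ∀ (xs ys : List (List C)), xs.map List.length = ys.map List.length →
    xs.flatten = ys.flatten → xs = ys
  | [], [], _, _ => rfl
  | [], y :: ys, h, _ => by simp at h
  | x :: xs, [], h, _ => by simp at h
  | x :: xs, y :: ys, h, hf => by
    simp only [List.map_cons, List.cons.injEq] at h
    simp only [List.flatten_cons] at hf
    obtain ⟨h1, h2⟩ := List.append_inj hf h.1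
    rw [h1, flatten_inj xs ys h.2 h2]

lemma sum_map_eq_sum_fin {α M : Type*} [AddCommMonoid M] (g : α → M) (bs : List α) {n : ℕ}
    (h : bs.length = n) :
    (bs.map g).sum = ∑ l : Fin n, g (bs.get (Fin.cast h.symm l)) := by
  subst h
  conv_lhs => rw [← List.ofFn_get bs]
  rw [List.map_ofFn, List.sum_ofFn]
  simp [Function.comp]

end Stmt3Aux

namespace Stmt3Aux
set_option linter.unusedSectionVars false
open CTree

variable {C : Type} [Fintype C]

lemma get_of_map_eq {α β : Type*} (f : α → β) (bs : List α) (ts : List β)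
    (h : bs.map f = ts) (i : ℕ) (h1 : i < bs.length) (h2 : i < ts.length) :
    f (bs[i]) = ts[i] := by
  subst h; simp

lemma mem_extS_node_iff (ts : List (CTree Unit)) (ds : List (List C))
    (hlen : ds.length = ts.length)
    (hnum : ∀ l : Fin ts.length, (ds.get (Fin.cast hlen.symm l)).length = numLeaves (ts.get l))
    (k : C) (B : CTree C) :
    B ∈ ExtS (CTree.node () ts) ds.flatten k ↔
      ∃ bs, B = CTree.node k bs ∧
        bs ∈ listPi (List.ofFn (fun l : Fin ts.length =>
          {b : CTree C | shape b = ts.get l ∧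
            leafColors b = ds.get (Fin.cast hlen.symm l)})) := by
  have hds_len : ds.map List.length = ts.map numLeaves := by
    refine List.ext_get (by simp [hlen]) ?_
    intro i h1 h2
    simp only [List.get_eq_getElem, List.getElem_map]
    exact hnum ⟨i, by simpa using h2⟩
  constructor
  · rintro ⟨hsh, hlf, hrc⟩
    obtain ⟨c, bs, rfl, hmap⟩ := shape_eq_node_iff.1 hsh
    have hck : c = k := hrc
    subst hck
    have hblen : bs.length = ts.length := by rw [← hmap]; simp
    have hbs_len : (bs.map leafColors).map List.length = ds.map List.length := by
      rw [hds_len, ← hmap, List.map_map, List.map_map]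
      refine List.map_congr_left fun b _ => ?_
      exact length_leafColors b
    have hlf' : (bs.map leafColors).flatten = ds.flatten := by simpa using hlf
    have hmaplf : bs.map leafColors = ds := flatten_inj _ _ hbs_len hlf'
    refine ⟨bs, rfl, ?_⟩
    rw [mem_listPi_ofFn_iff]
    refine ⟨hblen, fun l => ?_⟩
    refine ⟨?_, ?_⟩
    · show shape (bs.get (Fin.cast hblen.symm l)) = ts.get l
      simp only [List.get_eq_getElem]
      exact get_of_map_eq shape bs ts hmap l.1 (by omega) (by omega)
    · show leafColors (bs.get (Fin.cast hblen.symm l)) = ds.get (Fin.cast hlen.symm l)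
      simp only [List.get_eq_getElem]
      exact get_of_map_eq leafColors bs ds hmaplf l.1 (by omega) (by omega)
  · rintro ⟨bs, rfl, hbs⟩
    rw [mem_listPi_ofFn_iff] at hbs
    obtain ⟨hblen, hpt⟩ := hbs
    have hmap : bs.map shape = ts := by
      refine List.ext_get (by simp [hblen]) ?_
      intro i h1 h2
      have := (hpt ⟨i, h2⟩).1
      simpa [List.get_eq_getElem, List.getElem_map] using this
    have hmaplf : bs.map leafColors = ds := by
      refine List.ext_get (by simp [hblen, hlen]) ?_
      intro i h1 h2
      have := (hpt ⟨i, by simpa [← hlen] using h2⟩).2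
      simpa [List.get_eq_getElem, List.getElem_map] using this
    exact ⟨by simp [hmap], by simp [hmaplf], rfl⟩

end Stmt3Aux

namespace Stmt3Aux
set_option linter.unusedSectionVars false
open CTree

variable {C : Type} [Fintype C] [Nonempty C]

lemma part2 (ts : List (CTree Unit)) (hwf : ∀ s ∈ ts, WF s)
    (ds : List (List C)) (hlen : ds.length = ts.length)
    (hnum : ∀ l : Fin ts.length, (ds.get (Fin.cast hlen.symm l)).length = numLeaves (ts.get l))
    (k : C) (p : Fin ts.length → C)
    (hp : ∀ l : Fin ts.length, ∀ q' : C,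
      Scost (ts.get l) (ds.get (Fin.cast hlen.symm l)) (p l) + (if p l ≠ k then 1 else 0) ≤
      Scost (ts.get l) (ds.get (Fin.cast hlen.symm l)) q' + (if q' ≠ k then 1 else 0)) :
    (Scost (CTree.node () ts) ds.flatten k =
      ∑ l : Fin ts.length, (Scost (ts.get l) (ds.get (Fin.cast hlen.symm l)) (p l) +
        (if p l ≠ k then 1 else 0))) ∧
    Tcount (CTree.node () ts) ds.flatten k =
      ∏ l : Fin ts.length, ∑ q ∈ Finset.univ.filter (fun q : C =>
        ∀ q' : C,
          Scost (ts.get l) (ds.get (Fin.cast hlen.symm l)) q + (if q ≠ k then 1 else 0) ≤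
          Scost (ts.get l) (ds.get (Fin.cast hlen.symm l)) q' + (if q' ≠ k then 1 else 0)),
        Tcount (ts.get l) (ds.get (Fin.cast hlen.symm l)) q := by
  classical
  set t : Fin ts.length → CTree Unit := fun l => ts.get l with ht
  set dd : Fin ts.length → List C := fun l => ds.get (Fin.cast hlen.symm l) with hdd
  set ind : C → ℕ∞ := fun q => if q ≠ k then 1 else 0 with hind
  set val : Fin ts.length → C → ℕ∞ := fun l q => Scost (t l) (dd l) q + ind q with hval
  set E : Fin ts.length → Set (CTree C) :=
    fun l => {b | shape b = t l ∧ leafColors b = dd l} with hE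
  set g : CTree C → ℕ := fun b => changes b + if rootColor b ≠ k then 1 else 0 with hg
  have hgcast : ∀ b : CTree C, ((g b : ℕ) : ℕ∞) = (changes b : ℕ∞) + ind (rootColor b) := by
    intro b
    simp only [hg, hind]
    split <;> push_cast <;> simp
  have hvle : ∀ (l : Fin ts.length) (b : CTree C), b ∈ E l → val l (rootColor b) ≤ (g b : ℕ∞) := by
    intro l b hb
    rw [hgcast]
    exact add_le_add_left (scost_le ⟨hb.1, hb.2, rfl⟩) _
  have hm_le : ∀ (l : Fin ts.length) (q : C), val l (p l) ≤ val l q := fun l q => hp l q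
  have hm_ne_top : ∀ l : Fin ts.length, val l (p l) ≠ ⊤ := by
    intro l
    obtain ⟨B0, hB0s, hB0l⟩ := exists_ext (t l) (hwf _ (ts.get_mem _)) (dd l) (hnum l)
    have h1 : val l (p l) ≤ (g B0 : ℕ∞) :=
      le_trans (hm_le l (rootColor B0)) (hvle l B0 ⟨hB0s, hB0l⟩)
    exact fun h => (ENat.coe_ne_top (g B0)) (top_le_iff.1 (h ▸ h1))
  have hmem : ∀ B : CTree C, B ∈ ExtS (CTree.node () ts) ds.flatten k ↔
      ∃ bs, B = CTree.node k bs ∧ bs ∈ listPi (List.ofFn E) :=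
    fun B => mem_extS_node_iff ts ds hlen hnum k B
  have hchanges : ∀ bs : List (CTree C), changes (CTree.node k bs) = (bs.map g).sum := by
    intro bs
    rw [changes_node]
  have hwit : ∀ l : Fin ts.length, ∃ b ∈ E l, (g b : ℕ∞) = val l (p l) := by
    intro l
    have hS : Scost (t l) (dd l) (p l) ≠ ⊤ := by
      intro h
      exact hm_ne_top l (by rw [hval]; simp [h])
    obtain ⟨b, hb, hbv⟩ := exists_scost (scost_ne_top_iff.1 hS)
    refine ⟨b, ⟨hb.1, hb.2.1⟩, ?_⟩
    rw [hgcast, hb.2.2, hbv, hval]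
  have hSle : Scost (CTree.node () ts) ds.flatten k ≤ ∑ l : Fin ts.length, val l (p l) := by
    choose b hbE hbg using hwit
    have hmem' : CTree.node k (List.ofFn b) ∈ ExtS (CTree.node () ts) ds.flatten k := by
      rw [hmem]
      refine ⟨List.ofFn b, rfl, ?_⟩
      rw [mem_listPi_ofFn_iff]
      refine ⟨by simp, fun l => ?_⟩
      simpa [List.get_ofFn] using hbE l
    refine le_trans (scost_le hmem') ?_
    rw [hchanges, sum_map_eq_sum_fin g _ (by simp : (List.ofFn b).length = ts.length), Nat.cast_sum]
    refine le_of_eq (Finset.sum_congr rfl fun l _ => ?_)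
    rw [List.get_ofFn]
    simpa using hbg l
  have hSge : ∑ l : Fin ts.length, val l (p l) ≤ Scost (CTree.node () ts) ds.flatten k := by
    refine le_scost fun B hB => ?_
    obtain ⟨bs, rfl, hbs⟩ := (hmem B).1 hB
    rw [mem_listPi_ofFn_iff] at hbs
    obtain ⟨hblen, hpt⟩ := hbs
    rw [hchanges, sum_map_eq_sum_fin g bs hblen, Nat.cast_sum]
    refine Finset.sum_le_sum fun l _ => ?_
    exact le_trans (hm_le l _) (hvle l _ (hpt l))
  have hScost : Scost (CTree.node () ts) ds.flatten k = ∑ l : Fin ts.length, val l (p l) :=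
    le_antisymm hSle hSge
  refine ⟨hScost, ?_⟩
  -- counting part
  have hMex : ∀ l : Fin ts.length, ∃ M : ℕ, (M : ℕ∞) = val l (p l) :=
    fun l => ⟨(val l (p l)).toNat, ENat.coe_toNat (hm_ne_top l)⟩
  choose M hM using hMex
  have hMle : ∀ (l : Fin ts.length) (b : CTree C), b ∈ E l → M l ≤ g b := by
    intro l b hb
    rw [← Nat.cast_le (α := ℕ∞), hM]
    exact le_trans (hm_le l _) (hvle l b hb)
  set Mset : Fin ts.length → Set (CTree C) := fun l => {b ∈ E l | g b = M l} with hMset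
  have hMsetFin : ∀ l, (Mset l).Finite := fun l =>
    ((finite_shape_fiber (t l)).subset (fun b hb => hb.1.1))
  have himg : MinS (CTree.node () ts) ds.flatten k =
      (fun bs => CTree.node k bs) '' listPi (List.ofFn Mset) := by
    ext B
    rw [mem_minS_iff]
    constructor
    · rintro ⟨hB, hch⟩
      obtain ⟨bs, rfl, hbs⟩ := (hmem B).1 hB
      rw [mem_listPi_ofFn_iff] at hbs
      obtain ⟨hblen, hpt⟩ := hbs
      rw [hchanges, hScost, sum_map_eq_sum_fin g bs hblen] at hch
      have hch' : ∑ l : Fin ts.length, g (bs.get (Fin.cast hblen.symm l)) = ∑ l : Fin ts.length, M l := by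
        rw [← Nat.cast_inj (R := ℕ∞), Nat.cast_sum, Nat.cast_sum]
        rw [Nat.cast_sum] at hch
        rw [hch]
        exact Finset.sum_congr rfl fun l _ => (hM l).symm
      have hall : ∀ l : Fin ts.length, g (bs.get (Fin.cast hblen.symm l)) = M l := by
        have := (Finset.sum_eq_sum_iff_of_le
          (fun l _ => hMle l _ (hpt l))).1 hch'.symm
        intro l
        exact ((this l (Finset.mem_univ l))).symm
      refine ⟨bs, ?_, rfl⟩
      rw [mem_listPi_ofFn_iff]
      exact ⟨hblen, fun l => ⟨hpt l, hall l⟩⟩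
    · rintro ⟨bs, hbs, rfl⟩
      rw [mem_listPi_ofFn_iff] at hbs
      obtain ⟨hblen, hpt⟩ := hbs
      have hBmem : CTree.node k bs ∈ ExtS (CTree.node () ts) ds.flatten k := by
        rw [hmem]
        refine ⟨bs, rfl, ?_⟩
        rw [mem_listPi_ofFn_iff]
        exact ⟨hblen, fun l => (hpt l).1⟩
      refine ⟨hBmem, ?_⟩
      rw [hchanges, hScost, sum_map_eq_sum_fin g bs hblen, Nat.cast_sum]
      exact Finset.sum_congr rfl fun l _ => by rw [(hpt l).2, hM]
  have hinj : Function.Injective (fun bs : List (CTree C) => CTree.node k bs) := by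
    intro xs ys h
    injection h with h1 h2
  rw [tcount_def, himg, Set.ncard_image_of_injective _ hinj,
    ncard_listPi _ (by
      intro S hS
      simp only [List.mem_ofFn] at hS
      obtain ⟨l, rfl⟩ := hS
      exact hMsetFin l), List.map_ofFn, List.prod_ofFn]
  refine Finset.prod_congr rfl fun l _ => ?_
  -- per-child decomposition
  have hKiff : ∀ q : C, (q ∈ Finset.univ.filter (fun q : C =>
      ∀ q' : C, Scost (t l) (dd l) q + (if q ≠ k then 1 else 0) ≤
        Scost (t l) (dd l) q' + (if q' ≠ k then 1 else 0))) ↔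
      ∀ q' : C, val l q ≤ val l q' := by
    intro q
    simp only [Finset.mem_filter, Finset.mem_univ, true_and, hval, hind]
  set K : Finset C := Finset.univ.filter (fun q : C =>
      ∀ q' : C, Scost (t l) (dd l) q + (if q ≠ k then 1 else 0) ≤
        Scost (t l) (dd l) q' + (if q' ≠ k then 1 else 0)) with hK
  have hdecomp : Mset l = ⋃ q ∈ K, MinS (t l) (dd l) q := by
    ext b
    simp only [Set.mem_iUnion, exists_prop]
    constructor
    · rintro ⟨hbE, hgb⟩
      have hgb' : (g b : ℕ∞) = val l (p l) := by rw [hgb, hM]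
      have h1 : val l (p l) ≤ val l (rootColor b) := hm_le l _
      have h2 : val l (rootColor b) ≤ (g b : ℕ∞) := hvle l b hbE
      have h3 : val l (rootColor b) = val l (p l) := le_antisymm (h2.trans_eq hgb') h1
      have h5 : val l (rootColor b) = (g b : ℕ∞) := h3.trans hgb'.symm
      rw [hval] at h5
      rw [hgcast] at h5
      simp only at h5
      have hindne : ind (rootColor b) ≠ ⊤ := by
        simp only [hind]
        split <;> simp
      have h6 : Scost (t l) (dd l) (rootColor b) = (changes b : ℕ∞) :=
        WithTop.add_right_cancel hindne h5
      refine ⟨rootColor b, (hKiff _).2 (fun q' => h3.le.trans (hm_le l q')),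
        ⟨hbE.1, hbE.2, rfl⟩, h6.symm⟩
    · rintro ⟨q, hqK, ⟨hsh, hlf, hrc⟩, hchb⟩
      have hq := (hKiff q).1 hqK
      have h3 : val l q = val l (p l) := le_antisymm (hq (p l)) (hm_le l q)
      refine ⟨⟨hsh, hlf⟩, ?_⟩
      rw [← Nat.cast_inj (R := ℕ∞), hM, hgcast, hrc, hchb, ← h3, hval]
  simp only [Function.comp_apply]
  rw [hdecomp, ncard_biUnion K _ (fun q _ => minS_finite _ _ _) (fun q _ q' _ hne => by
    rw [Set.disjoint_left]
    rintro b ⟨⟨_, _, hr⟩, _⟩ ⟨⟨_, _, hr'⟩, _⟩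
    exact hne (hr.symm.trans hr'))]
  exact Finset.sum_congr rfl fun q _ => (tcount_def _ _ _).symm

end Stmt3Aux

theorem stmt3 (C : Type) [Fintype C] [Nonempty C] :
    -- (1) leaf case
    (∀ c k : C,
      Scost (CTree.leaf ()) [c] k = (if c = k then 0 else (⊤ : ℕ∞)) ∧
      Tcount (CTree.leaf ()) [c] k = (if c = k then 1 else 0)) ∧
    -- (2) internal node case
    (∀ (ts : List (CTree Unit)), ts ≠ [] → (∀ s ∈ ts, WF s) →
      ∀ (ds : List (List C)) (hlen : ds.length = ts.length),
      (∀ l : Fin ts.length, (ds.get (Fin.cast hlen.symm l)).length = numLeaves (ts.get l)) →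
      ∀ (k : C) (p : Fin ts.length → C),
      (∀ l : Fin ts.length, p l ∈
        {q : C | ∀ q' : C,
          Scost (ts.get l) (ds.get (Fin.cast hlen.symm l)) q + (if q ≠ k then 1 else 0) ≤
          Scost (ts.get l) (ds.get (Fin.cast hlen.symm l)) q' + (if q' ≠ k then 1 else 0)}) →
      Scost (CTree.node () ts) ds.flatten k =
        (∑ l : Fin ts.length,
          (Scost (ts.get l) (ds.get (Fin.cast hlen.symm l)) (p l) +
            (if p l ≠ k then 1 else 0))) ∧
      Tcount (CTree.node () ts) ds.flatten k =
        ∏ l : Fin ts.length,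
          ∑ q ∈ Finset.univ.filter (fun q : C =>
            ∀ q' : C,
              Scost (ts.get l) (ds.get (Fin.cast hlen.symm l)) q + (if q ≠ k then 1 else 0) ≤
              Scost (ts.get l) (ds.get (Fin.cast hlen.symm l)) q' +
                (if q' ≠ k then 1 else 0)),
            Tcount (ts.get l) (ds.get (Fin.cast hlen.symm l)) q) ∧
    -- (3) global count of minimal-change colorings extending `d`
    (∀ (T : CTree Unit), WF T → ∀ d : List C,
      {B : CTree C | shape B = T ∧ leafColors B = d ∧
          (changes B : ℕ∞) =
            ⨅ B' ∈ {B' : CTree C | shape B' = T ∧ leafColors B' = d},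
              (changes B' : ℕ∞)}.ncard =
        ∑ k ∈ Finset.univ.filter (fun k : C => Scost T d k = ⨅ k' : C, Scost T d k'),
          Tcount T d k) := by
  exact ⟨fun c k => ⟨Stmt3Aux.scost_leaf c k, Stmt3Aux.tcount_leaf c k⟩,
    fun ts hne hwf ds hlen hnum k p hp => Stmt3Aux.part2 ts hwf ds hlen hnum k p hp,
    fun T _ d => Stmt3Aux.part3 T d⟩
end
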